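/- For every D ≥ 0 and C ≥ 0, the rate-distortion-cost function admits the dual representation R(D,C) = max over s ≤ 0 and m ≤ 0 of ( R_{s,m} + s (D − D_{s,m}) + m (C − C_{s,m}) ). -/

import Mathlib

open Finset

noncomputable section

/-- A probability mass function on a finite alphabet. -/
def IsPMF {α : Type} [Fintype α] (p : α → ℝ) : Prop :=
  (∀ a, 0 ≤ p a) ∧ ∑ a, p a = 1

/-- A conditional probability mass function. -/
def IsCondPMF {α β : Type} [Fintype α] [Fintype β] (p : α → β → ℝ) : Prop :=
  ∀ a, IsPMF (p a)

/-- A Shannon strategy: an estimate function `Y → Xh` together with an action in `A`. -/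
abbrev Strat (Y Xh A : Type) : Type := (Y → Xh) × A

variable {X Y A Xh : Type} [Fintype X] [Fintype Y] [Fintype A] [Fintype Xh]
  [DecidableEq X] [DecidableEq Y] [DecidableEq A] [DecidableEq Xh]

/-- Joint pmf `P_{X,Y,T}(x,y,t) = P_X(x) P_{T|X}(t|x) P_{Y|X,A}(y|x,a(t))`. -/
def pXYT (PX : X → ℝ) (PW : A → X → Y → ℝ) (PT : X → Strat Y Xh A → ℝ)
    (x : X) (y : Y) (t : Strat Y Xh A) : ℝ :=
  PX x * PT x t * PW t.2 x y

/-- Action marginal `P_A`. -/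
def pA (PX : X → ℝ) (PT : X → Strat Y Xh A → ℝ) (a : A) : ℝ :=
  ∑ x, ∑ t, if t.2 = a then PX x * PT x t else 0

/-- Marginal `P_{X,A}`. -/
def pXA (PX : X → ℝ) (PT : X → Strat Y Xh A → ℝ) (x : X) (a : A) : ℝ :=
  ∑ t, if t.2 = a then PX x * PT x t else 0

/-- Marginal `P_{Y,A}`. -/
def pYA (PX : X → ℝ) (PW : A → X → Y → ℝ) (PT : X → Strat Y Xh A → ℝ)
    (y : Y) (a : A) : ℝ :=
  ∑ x, ∑ t, if t.2 = a then pXYT PX PW PT x y t else 0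

/-- Marginal `P_{X,Y,A}`. -/
def pXYA (PX : X → ℝ) (PW : A → X → Y → ℝ) (PT : X → Strat Y Xh A → ℝ)
    (x : X) (y : Y) (a : A) : ℝ :=
  ∑ t, if t.2 = a then pXYT PX PW PT x y t else 0

/-- Marginal `P_{Y,T}`. -/
def pYT (PX : X → ℝ) (PW : A → X → Y → ℝ) (PT : X → Strat Y Xh A → ℝ)
    (y : Y) (t : Strat Y Xh A) : ℝ :=
  ∑ x, pXYT PX PW PT x y t

/-- Mutual information `I(X; a(T))` (base-2 logarithms). -/
def IXA (PX : X → ℝ) (PT : X → Strat Y Xh A → ℝ) : ℝ :=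
  ∑ x, ∑ a, pXA PX PT x a * Real.logb 2 (pXA PX PT x a / (PX x * pA PX PT a))

/-- Conditional mutual information `I(X; T | Y, a(T))` (base-2 logarithms). -/
def IXTcondYA (PX : X → ℝ) (PW : A → X → Y → ℝ) (PT : X → Strat Y Xh A → ℝ) : ℝ :=
  ∑ x, ∑ y, ∑ t, pXYT PX PW PT x y t *
    Real.logb 2 (pXYT PX PW PT x y t * pYA PX PW PT y t.2 /
      (pXYA PX PW PT x y t.2 * pYT PX PW PT y t))

/-- Average distortion `E[d(X, T(Y))]`. -/
def expDist (PX : X → ℝ) (PW : A → X → Y → ℝ) (dist : X → Xh → ℝ)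
    (PT : X → Strat Y Xh A → ℝ) : ℝ :=
  ∑ x, ∑ y, ∑ t, pXYT PX PW PT x y t * dist x (t.1 y)

/-- Average action cost `E[Δ(a(T))]`. -/
def expCost (PX : X → ℝ) (cost : A → ℝ) (PT : X → Strat Y Xh A → ℝ) : ℝ :=
  ∑ x, ∑ t, PX x * PT x t * cost t.2

/-- The rate-distortion-cost function in the Shannon-strategy formulation. -/
def RDC (PX : X → ℝ) (PW : A → X → Y → ℝ) (dist : X → Xh → ℝ) (cost : A → ℝ)
    (D C : ℝ) : ℝ :=
  sInf { r : ℝ | ∃ PT : X → Strat Y Xh A → ℝ, IsCondPMF PT ∧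
    expDist PX PW dist PT ≤ D ∧ expCost PX cost PT ≤ C ∧
    r = IXA PX PT + IXTcondYA PX PW PT }
/-- The Lagrangian functional
`I(X;a(T)) + I(X;T|Y,a(T)) − s E[d(X,T(Y))] − m E[Δ(a(T))]`. -/
def Jfun (PX : X → ℝ) (PW : A → X → Y → ℝ) (dist : X → Xh → ℝ) (cost : A → ℝ)
    (s m : ℝ) (PT : X → Strat Y Xh A → ℝ) : ℝ :=
  IXA PX PT + IXTcondYA PX PW PT - s * expDist PX PW dist PT - m * expCost PX cost PT

/-- The unconstrained minimum `min_{P_{T|X}} { I(X;a(T)) + I(X;T|Y,a(T)) − s E[d] − m E[Δ] }`. -/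
def Jmin (PX : X → ℝ) (PW : A → X → Y → ℝ) (dist : X → Xh → ℝ) (cost : A → ℝ)
    (s m : ℝ) : ℝ :=
  sInf { r : ℝ | ∃ PT : X → Strat Y Xh A → ℝ, IsCondPMF PT ∧
    r = Jfun PX PW dist cost s m PT }

end

/-!
Write `R(P) = I(X;A) + I(X;T|Y,A)` for the rate of a test channel `P = P_{T|X}`. On the compact
convex set of test channels `R` is continuous, being `H(A) + H(T|Y,A) - H(T|X)`, and convex:
`R(P)` is the minimum over weights `q` of `∑ p(x,y,t) log (P(t|x) / q_y(t))`, a jointly convex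
function of `(P, q)` by the log-sum inequality, and the admissible pairs `(P, q)` form a convex
set. Hence the triples `(d, c, r)` dominating some `(E[d(X,T(Y))], E[Δ(a(T))], R(P))` form a
closed convex upper set in `ℝ³`. A point `(D, C, r)` with `r < R(D, C)` lies outside it, so a
plane strictly separates the two; the plane is not vertical because it passes below a feasible
point, and its slopes `s, m` are nonpositive because the set is an upper set. Then the
Lagrangian dual value at `(s, m)` exceeds `r`. The reverse inequality is weak duality.
-/

open Real

section LogInequalities

variable {b : ℝ}

theorem sub_le_mul_log_div {u v : ℝ} (hu : 0 ≤ u) (hv : 0 ≤ v) (huv : 0 < u → 0 < v) :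
    u - v ≤ u * log (u / v) := by
  rcases hu.eq_or_lt with rfl | hu
  · simpa using hv
  have hv := huv hu
  have h := mul_le_mul_of_nonneg_left (one_sub_inv_le_log_of_pos (div_pos hu hv)) hu.le
  rwa [inv_div, mul_sub, mul_one, mul_div_cancel₀ _ hu.ne'] at h

theorem sub_div_log_le_mul_logb_div (hb : 1 < b) {u v : ℝ} (hu : 0 ≤ u) (hv : 0 ≤ v)
    (huv : 0 < u → 0 < v) : (u - v) / log b ≤ u * logb b (u / v) := by
  rw [logb, ← mul_div_assoc]
  exact div_le_div_of_nonneg_right (sub_le_mul_log_div hu hv huv) (log_pos hb).le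

theorem add_mul_logb_div_add_le (hb : 1 < b) {u₁ u₂ v₁ v₂ : ℝ} (hu₁ : 0 ≤ u₁) (hu₂ : 0 ≤ u₂)
    (hv₁ : 0 ≤ v₁) (hv₂ : 0 ≤ v₂) (h₁ : 0 < u₁ → 0 < v₁) (h₂ : 0 < u₂ → 0 < v₂) :
    (u₁ + u₂) * logb b ((u₁ + u₂) / (v₁ + v₂)) ≤
      u₁ * logb b (u₁ / v₁) + u₂ * logb b (u₂ / v₂) := by
  rcases (add_nonneg hu₁ hu₂).eq_or_lt with hU | hU
  · obtain ⟨rfl, rfl⟩ := (add_eq_zero_iff_of_nonneg hu₁ hu₂).mp hU.symm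
    simp
  have hV : 0 < v₁ + v₂ := by
    rcases hu₁.eq_or_lt with rfl | hu₁'
    · exact add_pos_of_nonneg_of_pos hv₁ (h₂ (by linarith))
    · exact add_pos_of_pos_of_nonneg (h₁ hu₁') hv₂
  set k := (u₁ + u₂) / (v₁ + v₂)
  have hk : 0 < k := div_pos hU hV
  -- Compare each `uᵢ` with `vᵢ k`; the masses `∑ uᵢ` and `∑ vᵢ k` agree.
  have key : ∀ {u v : ℝ}, 0 ≤ u → 0 ≤ v → (0 < u → 0 < v) →
      (u - v * k) / log b + u * logb b k ≤ u * logb b (u / v) := by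
    intro u v hu hv huv
    have h := sub_div_log_le_mul_logb_div hb hu (mul_nonneg hv hk.le)
      fun h => mul_pos (huv h) hk
    rcases hu.eq_or_lt with rfl | hu
    · simpa using h
    rw [← div_div, logb_div (div_pos hu (huv hu)).ne' hk.ne', mul_sub] at h
    linarith
  have hmass : (u₁ - v₁ * k) + (u₂ - v₂ * k) = 0 := by
    simp only [k]
    field_simp
    ring
  have hsum : (u₁ - v₁ * k) / log b + (u₂ - v₂ * k) / log b = 0 := by
    rw [← add_div, hmass, zero_div]
  linarith [add_le_add (key hu₁ hv₁ h₁) (key hu₂ hv₂ h₂)]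

theorem mul_logb_div_mul_left (a u v : ℝ) :
    a * u * logb b (a * u / (a * v)) = a * (u * logb b (u / v)) := by
  rcases eq_or_ne a 0 with rfl | ha
  · simp
  rw [mul_div_mul_left _ _ ha, mul_assoc]

theorem convexOn_mul_logb_div (hb : 1 < b) :
    ConvexOn ℝ {p : ℝ × ℝ | 0 ≤ p.1 ∧ 0 ≤ p.2 ∧ (0 < p.1 → 0 < p.2)}
      fun p => p.1 * logb b (p.1 / p.2) := by
  refine ⟨?_, ?_⟩
  · rintro ⟨u₁, v₁⟩ ⟨hu₁, hv₁, h₁⟩ ⟨u₂, v₂⟩ ⟨hu₂, hv₂, h₂⟩ l m hl hm -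
    refine ⟨by simp only [Prod.fst_add, Prod.smul_fst, smul_eq_mul]; positivity,
      by simp only [Prod.snd_add, Prod.smul_snd, smul_eq_mul]; positivity, fun h => ?_⟩
    simp only [Prod.fst_add, Prod.snd_add, Prod.smul_fst, Prod.smul_snd, smul_eq_mul] at h ⊢
    rcases (mul_nonneg hl hu₁).eq_or_lt with h0 | h0
    · have h' : 0 < m * u₂ := by linarith
      exact add_pos_of_nonneg_of_pos (mul_nonneg hl hv₁)
        (mul_pos (pos_of_mul_pos_left h' hu₂) (h₂ (pos_of_mul_pos_right h' hm)))
    · exact add_pos_of_pos_of_nonneg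
        (mul_pos (pos_of_mul_pos_left h0 hu₁) (h₁ (pos_of_mul_pos_right h0 hl)))
        (mul_nonneg hm hv₂)
  · rintro ⟨u₁, v₁⟩ ⟨hu₁, hv₁, h₁⟩ ⟨u₂, v₂⟩ ⟨hu₂, hv₂, h₂⟩ l m hl hm -
    simp only [Prod.fst_add, Prod.snd_add, Prod.smul_fst, Prod.smul_snd, smul_eq_mul]
    rw [← mul_logb_div_mul_left l u₁ v₁, ← mul_logb_div_mul_left m u₂ v₂]
    exact add_mul_logb_div_add_le hb (mul_nonneg hl hu₁) (mul_nonneg hm hu₂)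
      (mul_nonneg hl hv₁) (mul_nonneg hm hv₂)
      (fun h => mul_pos (pos_of_mul_pos_left h hu₁) (h₁ (pos_of_mul_pos_right h hl)))
      (fun h => mul_pos (pos_of_mul_pos_left h hu₂) (h₂ (pos_of_mul_pos_right h hm)))

theorem continuous_mul_logb : Continuous fun r : ℝ => r * logb b r := by
  simpa [logb, mul_div_assoc] using continuous_mul_log.div_const (log b)

end LogInequalities

theorem sum_fiberwise_ite_mul {ι κ : Type*} [Fintype ι] [Fintype κ] [DecidableEq κ] (p : ι → κ)
    (f : ι → ℝ) (g : κ → ℝ) :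
    ∑ k, (∑ i, if p i = k then f i else 0) * g k = ∑ i, f i * g (p i) := by
  simp only [Finset.sum_mul, ite_mul, zero_mul]
  rw [Finset.sum_comm]
  simp

theorem le_sum_ite_fiber {ι κ : Type*} [Fintype ι] [DecidableEq κ] (p : ι → κ) {f : ι → ℝ}
    (hf : ∀ i, 0 ≤ f i) (i : ι) : f i ≤ ∑ j, if p j = p i then f j else 0 := by
  simpa using Finset.single_le_sum (f := fun j => if p j = p i then f j else 0)
    (fun j _ => by split_ifs <;> simp [hf]) (Finset.mem_univ i)

section LagrangeDuality

theorem nonpos_of_forall_nonneg_mul_le {α K : ℝ} (h : ∀ t : ℝ, 0 ≤ t → t * α ≤ K) : α ≤ 0 := by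
  by_contra! hα
  have := h ((|K| + 1) / α) (by positivity)
  rw [div_mul_cancel₀ _ hα.ne'] at this
  linarith [le_abs_self K]

theorem exists_nonpos_slopes_lt {E : Set (ℝ × ℝ × ℝ)} (hconv : Convex ℝ E) (hclosed : IsClosed E)
    (hup : IsUpperSet E) {d c r r' : ℝ} (hmem : (d, c, r') ∈ E) (hnot : (d, c, r) ∉ E) :
    ∃ s ≤ 0, ∃ m ≤ 0, ∀ p ∈ E, r - s * d - m * c < p.2.2 - s * p.1 - m * p.2.1 := by
  obtain ⟨f, u, hfE, hfu⟩ := geometric_hahn_banach_closed_point hconv hclosed hnot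
  -- `f < u` on every ray `(d, c, r') + t • e` with `e ≥ 0`, since these rays lie in `E`.
  have hslope (e : ℝ × ℝ × ℝ) (he : 0 ≤ e) : f e ≤ 0 :=
    nonpos_of_forall_nonneg_mul_le (K := u - f (d, c, r')) fun t ht => by
      have := hfE _ (hup (le_add_of_nonneg_right (smul_nonneg ht he)) hmem)
      rw [map_add, map_smul, smul_eq_mul] at this
      linarith
  have hf (p : ℝ × ℝ × ℝ) :
      f p = p.1 * f (1, 0, 0) + p.2.1 * f (0, 1, 0) + p.2.2 * f (0, 0, 1) := by
    have hp : p = p.1 • ((1 : ℝ), (0 : ℝ), (0 : ℝ)) + p.2.1 • ((0 : ℝ), (1 : ℝ), (0 : ℝ)) +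
        p.2.2 • ((0 : ℝ), (0 : ℝ), (1 : ℝ)) := by
      ext <;> simp
    conv_lhs => rw [hp]
    simp only [map_add, map_smul, smul_eq_mul]
  set α := f (1, 0, 0)
  set β := f (0, 1, 0)
  set γ := f (0, 0, 1)
  have hα : α ≤ 0 := hslope _ (by simp [Prod.le_def])
  have hβ : β ≤ 0 := hslope _ (by simp [Prod.le_def])
  have hγ : γ < 0 := by
    have hrr' : r < r' := lt_of_not_ge fun h => hnot (hup (by simp [h]) hmem)
    have := hfE _ hmem
    rw [hf] at this hfu
    simp only at this hfu
    nlinarith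
  refine ⟨-α / γ, div_nonpos_of_nonneg_of_nonpos (by linarith) hγ.le,
    -β / γ, div_nonpos_of_nonneg_of_nonpos (by linarith) hγ.le, fun p hp => ?_⟩
  have hfp := hfE p hp
  rw [hf] at hfp hfu
  have hdiff : (r - -α / γ * d - -β / γ * c) - (p.2.2 - -α / γ * p.1 - -β / γ * p.2.1) =
      ((d * α + c * β + r * γ) - (p.1 * α + p.2.1 * β + p.2.2 * γ)) / γ := by
    field_simp [hγ.ne]
    ring
  have : ((d * α + c * β + r * γ) - (p.1 * α + p.2.1 * β + p.2.2 * γ)) / γ < 0 :=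
    div_neg_of_pos_of_neg (by linarith) hγ
  linarith

variable {ι : Type*} {S : Set ι} {F g h : ι → ℝ}

def achievableRegion (S : Set ι) (F g h : ι → ℝ) : Set (ℝ × ℝ × ℝ) :=
  {p | ∃ i ∈ S, (g i, h i, F i) ≤ p}

theorem isUpperSet_achievableRegion : IsUpperSet (achievableRegion S F g h) :=
  fun _ _ hpq ⟨i, hi, hip⟩ => ⟨i, hi, hip.trans hpq⟩

theorem convex_achievableRegion [AddCommGroup ι] [Module ℝ ι] (hF : ConvexOn ℝ S F)
    (hg : ConvexOn ℝ S g) (hh : ConvexOn ℝ S h) : Convex ℝ (achievableRegion S F g h) := by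
  rintro p ⟨i, hi, hip⟩ q ⟨j, hj, hjq⟩ a b ha hb hab
  refine ⟨a • i + b • j, hF.1 hi hj ha hb hab, le_trans ?_
    (add_le_add (smul_le_smul_of_nonneg_left hip ha) (smul_le_smul_of_nonneg_left hjq hb))⟩
  exact Prod.mk_le_mk.2 ⟨hg.2 hi hj ha hb hab, Prod.mk_le_mk.2
    ⟨hh.2 hi hj ha hb hab, hF.2 hi hj ha hb hab⟩⟩

open scoped Pointwise in
theorem isClosed_achievableRegion [TopologicalSpace ι] (hS : IsCompact S) (hF : ContinuousOn F S)
    (hg : Continuous g) (hh : Continuous h) : IsClosed (achievableRegion S F g h) := by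
  have : achievableRegion S F g h =
      (fun i => (g i, h i, F i)) '' S + Set.Ici (0 : ℝ × ℝ × ℝ) := by
    ext p
    simp only [achievableRegion, Set.mem_ofPred_eq, Set.mem_add, Set.mem_image, Set.mem_Ici]
    constructor
    · rintro ⟨i, hi, hip⟩
      exact ⟨_, ⟨i, hi, rfl⟩, p - (g i, h i, F i), sub_nonneg.2 hip, add_sub_cancel _ _⟩
    · rintro ⟨_, ⟨i, hi, rfl⟩, q, hq, rfl⟩
      exact ⟨i, hi, le_add_of_nonneg_right hq⟩
  rw [this]
  exact isClosed_Ici.add_left_of_isCompact (hS.image_of_continuousOn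
    (hg.continuousOn.prodMk (hh.continuousOn.prodMk hF)))

theorem sInf_constrained_eq_sSup_lagrangeDual [AddCommGroup ι] [Module ℝ ι]
    [TopologicalSpace ι] (hS : IsCompact S) (hF : ConvexOn ℝ S F)
    (hg : ConvexOn ℝ S g) (hh : ConvexOn ℝ S h) (hFc : ContinuousOn F S) (hgc : Continuous g)
    (hhc : Continuous h) {D C : ℝ} (hfeas : ∃ i ∈ S, g i ≤ D ∧ h i ≤ C) :
    sInf {r | ∃ i, i ∈ S ∧ g i ≤ D ∧ h i ≤ C ∧ r = F i} =
      sSup {v | ∃ s : ℝ, s ≤ 0 ∧ ∃ m : ℝ, m ≤ 0 ∧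
        v = sInf {r | ∃ i, i ∈ S ∧ r = F i - s * g i - m * h i} + s * D + m * C} := by
  obtain ⟨iₘ, ⟨hiₘ, hgₘ, hhₘ⟩, hmin⟩ := (hS.inter_right
      ((isClosed_le hgc continuous_const).inter (isClosed_le hhc continuous_const))).exists_isMinOn
    hfeas (hFc.mono Set.inter_subset_left)
  have hprimal : sInf {r | ∃ i, i ∈ S ∧ g i ≤ D ∧ h i ≤ C ∧ r = F i} = F iₘ :=
    IsLeast.csInf_eq ⟨⟨iₘ, hiₘ, hgₘ, hhₘ, rfl⟩, by
      rintro _ ⟨i, hi, hgi, hhi, rfl⟩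
      exact isMinOn_iff.mp hmin i ⟨hi, hgi, hhi⟩⟩
  have hbdd (s m : ℝ) : BddBelow {r | ∃ i, i ∈ S ∧ r = F i - s * g i - m * h i} := by
    obtain ⟨lb, hlb⟩ := hS.bddBelow_image (f := fun i => F i - s * g i - m * h i)
      ((hFc.sub (continuous_const.mul hgc).continuousOn).sub
        (continuous_const.mul hhc).continuousOn)
    exact ⟨lb, by rintro _ ⟨i, hi, rfl⟩; exact hlb ⟨i, hi, rfl⟩⟩
  rw [hprimal, eq_comm]
  refine IsLUB.csSup_eq ⟨?_, fun b hb => ?_⟩ ⟨_, 0, le_rfl, 0, le_rfl, rfl⟩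
  · rintro _ ⟨s, hs, m, hm, rfl⟩
    have := csInf_le (hbdd s m) ⟨iₘ, hiₘ, rfl⟩
    linarith [mul_nonpos_of_nonpos_of_nonneg hs (sub_nonneg.2 hgₘ),
      mul_nonpos_of_nonpos_of_nonneg hm (sub_nonneg.2 hhₘ)]
  by_contra! hb'
  have hnot : (D, C, (b + F iₘ) / 2) ∉ achievableRegion S F g h := by
    rintro ⟨i, hi, hle⟩
    obtain ⟨hgi, hhi, hFi⟩ : g i ≤ D ∧ h i ≤ C ∧ F i ≤ (b + F iₘ) / 2 := by
      simpa only [Prod.mk_le_mk] using hle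
    linarith [isMinOn_iff.mp hmin i ⟨hi, hgi, hhi⟩]
  obtain ⟨s, hs, m, hm, hsep⟩ := exists_nonpos_slopes_lt (convex_achievableRegion hF hg hh)
    (isClosed_achievableRegion hS hFc hgc hhc) isUpperSet_achievableRegion
    ⟨iₘ, hiₘ, Prod.mk_le_mk.2 ⟨hgₘ, hhₘ, le_rfl⟩⟩ hnot
  have hdual : (b + F iₘ) / 2 - s * D - m * C ≤
      sInf {r | ∃ i, i ∈ S ∧ r = F i - s * g i - m * h i} :=
    le_csInf ⟨_, iₘ, hiₘ, rfl⟩ (by rintro _ ⟨i, hi, rfl⟩; exact (hsep _ ⟨i, hi, le_rfl⟩).le)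
  linarith [hb ⟨s, hs, m, hm, rfl⟩]

theorem sInf_constrained_eq_sSup_at_lagrangeMinimizers [AddCommGroup ι] [Module ℝ ι]
    [TopologicalSpace ι] (hS : IsCompact S) (hF : ConvexOn ℝ S F)
    (hg : ConvexOn ℝ S g) (hh : ConvexOn ℝ S h) (hFc : ContinuousOn F S) (hgc : Continuous g)
    (hhc : Continuous h) {D C : ℝ} (hfeas : ∃ i ∈ S, g i ≤ D ∧ h i ≤ C) :
    sInf {r | ∃ i, i ∈ S ∧ g i ≤ D ∧ h i ≤ C ∧ r = F i} =
      sSup {v | ∃ s : ℝ, s ≤ 0 ∧ ∃ m : ℝ, m ≤ 0 ∧ ∃ i, i ∈ S ∧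
        (∀ j, j ∈ S → F i - s * g i - m * h i ≤ F j - s * g j - m * h j) ∧
        v = (s * g i + m * h i + sInf {r | ∃ j, j ∈ S ∧ r = F j - s * g j - m * h j}) +
          s * (D - g i) + m * (C - h i)} := by
  rw [sInf_constrained_eq_sSup_lagrangeDual hS hF hg hh hFc hgc hhc hfeas]
  congr 1
  ext v
  constructor
  · rintro ⟨s, hs, m, hm, rfl⟩
    obtain ⟨i, hi, hmin⟩ := hS.exists_isMinOn (hfeas.imp fun _ h => h.1)
      ((hFc.sub (continuous_const.mul hgc).continuousOn).sub
        (continuous_const.mul hhc).continuousOn)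
    exact ⟨s, hs, m, hm, i, hi, isMinOn_iff.mp hmin, by ring⟩
  · rintro ⟨s, hs, m, hm, -, -, -, rfl⟩
    exact ⟨s, hs, m, hm, by ring⟩

end LagrangeDuality

section CondPMF

variable {α β : Type} [Fintype α] [Fintype β]

theorem setOf_isCondPMF_eq_pi :
    {P : α → β → ℝ | IsCondPMF P} = Set.univ.pi fun _ => stdSimplex ℝ β := by
  ext P
  simp [IsCondPMF, IsPMF, stdSimplex]

theorem isCompact_setOf_isCondPMF : IsCompact {P : α → β → ℝ | IsCondPMF P} := by
  rw [setOf_isCondPMF_eq_pi]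
  exact isCompact_univ_pi fun _ => isCompact_stdSimplex ℝ β

theorem convex_setOf_isCondPMF : Convex ℝ {P : α → β → ℝ | IsCondPMF P} := by
  rw [setOf_isCondPMF_eq_pi]
  exact convex_pi fun _ _ => convex_stdSimplex ℝ β

end CondPMF

section Marginals

variable {X Y A Xh : Type} {PX : X → ℝ} {PW : A → X → Y → ℝ} {P : X → Strat Y Xh A → ℝ}

theorem pXYT_nonneg (hPX : ∀ x, 0 ≤ PX x) (hPW : ∀ a x y, 0 ≤ PW a x y) (hP : ∀ x t, 0 ≤ P x t)
    (x : X) (y : Y) (t : Strat Y Xh A) : 0 ≤ pXYT PX PW P x y t :=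
  mul_nonneg (mul_nonneg (hPX x) (hP x t)) (hPW t.2 x y)

theorem pXYT_smul_add_smul (P₁ P₂ : X → Strat Y Xh A → ℝ) (l m : ℝ) (x : X) (y : Y)
    (t : Strat Y Xh A) : pXYT PX PW (l • P₁ + m • P₂) x y t =
      l * pXYT PX PW P₁ x y t + m * pXYT PX PW P₂ x y t := by
  simp only [pXYT, Pi.add_apply, Pi.smul_apply, smul_eq_mul]
  ring

theorem pYT_nonneg [Fintype X] (hPX : ∀ x, 0 ≤ PX x) (hPW : ∀ a x y, 0 ≤ PW a x y)
    (hP : ∀ x t, 0 ≤ P x t) (y : Y) (t : Strat Y Xh A) : 0 ≤ pYT PX PW P y t :=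
  Finset.sum_nonneg fun x _ => pXYT_nonneg hPX hPW hP x y t

theorem continuous_pYT [Fintype X] (y : Y) (t : Strat Y Xh A) :
    Continuous fun P : X → Strat Y Xh A → ℝ => pYT PX PW P y t := by
  unfold pYT pXYT
  fun_prop

variable [Fintype X] [Fintype Y] [Fintype A] [Fintype Xh] [DecidableEq Y]

theorem sum_pXYT_mul_eq_sum_mul (hPW : ∀ a x, IsPMF (PW a x)) (f : X → Strat Y Xh A → ℝ) :
    ∑ x, ∑ y, ∑ t, pXYT PX PW P x y t * f x t = ∑ x, ∑ t, PX x * P x t * f x t := by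
  refine Finset.sum_congr rfl fun x _ => ?_
  rw [Finset.sum_comm]
  refine Finset.sum_congr rfl fun t _ => ?_
  simp only [pXYT, ← Finset.sum_mul, ← Finset.mul_sum, (hPW t.2 x).2, mul_one]

theorem sum_pXYT_mul_eq_sum_pYT_mul (f : Y → Strat Y Xh A → ℝ) :
    ∑ x, ∑ y, ∑ t, pXYT PX PW P x y t * f y t = ∑ y, ∑ t, pYT PX PW P y t * f y t := by
  rw [Finset.sum_comm]
  refine Finset.sum_congr rfl fun y _ => ?_
  rw [Finset.sum_comm]
  simp only [pYT, Finset.sum_mul]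

variable [DecidableEq A]

theorem pYA_eq_sum_pYT (y : Y) (a : A) :
    pYA PX PW P y a = ∑ t, if t.2 = a then pYT PX PW P y t else 0 := by
  rw [pYA, Finset.sum_comm]
  simp only [pYT, Finset.sum_ite_irrel, Finset.sum_const_zero]

omit [Fintype X] in
theorem pXYA_eq_pXA_mul (x : X) (y : Y) (a : A) :
    pXYA PX PW P x y a = pXA PX P x a * PW a x y := by
  rw [pXYA, pXA, Finset.sum_mul]
  refine Finset.sum_congr rfl fun t _ => ?_
  split_ifs with h <;> simp [pXYT, h]

theorem pYA_nonneg (hPX : ∀ x, 0 ≤ PX x) (hPW : ∀ a x y, 0 ≤ PW a x y) (hP : ∀ x t, 0 ≤ P x t)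
    (y : Y) (a : A) : 0 ≤ pYA PX PW P y a := by
  rw [pYA_eq_sum_pYT]
  exact Finset.sum_nonneg fun t _ => by split_ifs <;> simp [pYT_nonneg hPX hPW hP]

omit [Fintype X] in
theorem pXA_nonneg (hPX : ∀ x, 0 ≤ PX x) (hP : ∀ x t, 0 ≤ P x t) (x : X) (a : A) :
    0 ≤ pXA PX P x a :=
  Finset.sum_nonneg fun t _ => by split_ifs <;> simp [mul_nonneg (hPX x) (hP x t)]

theorem pA_nonneg (hPX : ∀ x, 0 ≤ PX x) (hP : ∀ x t, 0 ≤ P x t) (a : A) : 0 ≤ pA PX P a :=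
  Finset.sum_nonneg fun x _ => pXA_nonneg hPX hP x a

theorem pos_of_pXYT_pos (hPX : ∀ x, 0 ≤ PX x) (hPW : ∀ a x y, 0 ≤ PW a x y)
    (hP : ∀ x t, 0 ≤ P x t) {x : X} {y : Y} {t : Strat Y Xh A} (h : 0 < pXYT PX PW P x y t) :
    0 < PX x ∧ 0 < P x t ∧ 0 < PW t.2 x y ∧ 0 < pXA PX P x t.2 ∧ 0 < pA PX P t.2 ∧
      0 < pYT PX PW P y t ∧ 0 < pYA PX PW P y t.2 := by
  have hPXx : 0 < PX x := (hPX x).lt_of_ne' (left_ne_zero_of_mul (left_ne_zero_of_mul h.ne'))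
  have hPxt : 0 < P x t := (hP x t).lt_of_ne' (right_ne_zero_of_mul (left_ne_zero_of_mul h.ne'))
  have hPWxy : 0 < PW t.2 x y := (hPW t.2 x y).lt_of_ne' (right_ne_zero_of_mul h.ne')
  have hXA : 0 < pXA PX P x t.2 := (mul_pos hPXx hPxt).trans_le
    (le_sum_ite_fiber Prod.snd (fun t => mul_nonneg (hPX x) (hP x t)) t)
  have hYT : 0 < pYT PX PW P y t :=
    h.trans_le (Finset.single_le_sum (fun x _ => pXYT_nonneg hPX hPW hP x y t) (Finset.mem_univ x))
  refine ⟨hPXx, hPxt, hPWxy, hXA, hXA.trans_le ?_, hYT, hYT.trans_le ?_⟩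
  · exact Finset.single_le_sum (f := fun x => pXA PX P x t.2)
      (fun x _ => pXA_nonneg hPX hP x t.2) (Finset.mem_univ x)
  · rw [pYA_eq_sum_pYT]
    exact le_sum_ite_fiber Prod.snd (pYT_nonneg hPX hPW hP y) t

end Marginals

section Rate

variable {X Y A Xh : Type} [Fintype X] [Fintype Y] [Fintype A] [Fintype Xh] [DecidableEq Y]
  [DecidableEq A] {PX : X → ℝ} {PW : A → X → Y → ℝ} {P : X → Strat Y Xh A → ℝ}

variable (PX PW) in
noncomputable def rateFun (P : X → Strat Y Xh A → ℝ) : ℝ :=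
  IXA PX P + IXTcondYA PX PW P

variable (PX PW P) in
/-- The information density `log (P(t|x) / (P_A(a) P(t|y,a)))` with `a = a(t)`. -/
noncomputable def infoDensity (x : X) (y : Y) (t : Strat Y Xh A) : ℝ :=
  logb 2 (P x t) + logb 2 (pYA PX PW P y t.2) - logb 2 (pYT PX PW P y t) - logb 2 (pA PX P t.2)

theorem IXA_eq_sum_pXYT_mul (hPW : ∀ a x, IsPMF (PW a x)) :
    IXA PX P = ∑ x, ∑ y, ∑ t,
      pXYT PX PW P x y t * logb 2 (pXA PX P x t.2 / (PX x * pA PX P t.2)) := by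
  rw [sum_pXYT_mul_eq_sum_mul hPW fun x t => logb 2 (pXA PX P x t.2 / (PX x * pA PX P t.2))]
  exact Finset.sum_congr rfl fun x _ => sum_fiberwise_ite_mul Prod.snd (fun t => PX x * P x t)
    fun a => logb 2 (pXA PX P x a / (PX x * pA PX P a))

theorem rateFun_eq_sum_infoDensity (hPX : ∀ x, 0 ≤ PX x) (hPW : ∀ a x, IsPMF (PW a x))
    (hP : ∀ x t, 0 ≤ P x t) :
    rateFun PX PW P = ∑ x, ∑ y, ∑ t, pXYT PX PW P x y t * infoDensity PX PW P x y t := by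
  have hPW0 a x y : 0 ≤ PW a x y := (hPW a x).1 y
  rw [rateFun, IXA_eq_sum_pXYT_mul hPW, IXTcondYA]
  simp only [← Finset.sum_add_distrib, ← mul_add]
  refine Finset.sum_congr rfl fun x _ => Finset.sum_congr rfl fun y _ =>
    Finset.sum_congr rfl fun t _ => ?_
  rcases (pXYT_nonneg hPX hPW0 hP x y t).eq_or_lt with h | h
  · simp [← h]
  obtain ⟨h₁, h₂, h₃, h₄, h₅, h₆, h₇⟩ := pos_of_pXYT_pos hPX hPW0 hP h
  congr 1
  rw [pXYA_eq_pXA_mul, infoDensity, pXYT]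
  simp [logb_div, logb_mul, h₁.ne', h₂.ne', h₃.ne', h₄.ne', h₅.ne', h₆.ne', h₇.ne']
  ring

theorem sum_pXYT_mul_infoDensity (hPW : ∀ a x, IsPMF (PW a x)) :
    ∑ x, ∑ y, ∑ t, pXYT PX PW P x y t * infoDensity PX PW P x y t =
      ∑ x, ∑ t, PX x * (P x t * logb 2 (P x t)) +
        ∑ y, ∑ a, pYA PX PW P y a * logb 2 (pYA PX PW P y a) -
        ∑ y, ∑ t, pYT PX PW P y t * logb 2 (pYT PX PW P y t) -
        ∑ a, pA PX P a * logb 2 (pA PX P a) := by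
  have hT : ∑ x, ∑ y, ∑ t, pXYT PX PW P x y t * logb 2 (P x t) =
      ∑ x, ∑ t, PX x * (P x t * logb 2 (P x t)) := by
    simp only [sum_pXYT_mul_eq_sum_mul hPW fun x t => logb 2 (P x t), mul_assoc]
  have hYA : ∑ x, ∑ y, ∑ t, pXYT PX PW P x y t * logb 2 (pYA PX PW P y t.2) =
      ∑ y, ∑ a, pYA PX PW P y a * logb 2 (pYA PX PW P y a) := by
    rw [sum_pXYT_mul_eq_sum_pYT_mul fun y t => logb 2 (pYA PX PW P y t.2)]
    refine Finset.sum_congr rfl fun y _ => ?_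
    rw [← sum_fiberwise_ite_mul Prod.snd (pYT PX PW P y) fun a => logb 2 (pYA PX PW P y a)]
    simp only [← pYA_eq_sum_pYT]
  have hYT : ∑ x, ∑ y, ∑ t, pXYT PX PW P x y t * logb 2 (pYT PX PW P y t) =
      ∑ y, ∑ t, pYT PX PW P y t * logb 2 (pYT PX PW P y t) :=
    sum_pXYT_mul_eq_sum_pYT_mul fun y t => logb 2 (pYT PX PW P y t)
  have hA : ∑ x, ∑ y, ∑ t, pXYT PX PW P x y t * logb 2 (pA PX P t.2) =
      ∑ a, pA PX P a * logb 2 (pA PX P a) := by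
    rw [sum_pXYT_mul_eq_sum_mul hPW fun x t => logb 2 (pA PX P t.2)]
    calc ∑ x, ∑ t, PX x * P x t * logb 2 (pA PX P t.2)
        = ∑ x, ∑ a, pXA PX P x a * logb 2 (pA PX P a) := Finset.sum_congr rfl fun x _ =>
          (sum_fiberwise_ite_mul Prod.snd (fun t => PX x * P x t) fun a => logb 2 (pA PX P a)).symm
      _ = ∑ a, pA PX P a * logb 2 (pA PX P a) := by
        rw [Finset.sum_comm]
        simp only [← Finset.sum_mul]
        rfl
  simp only [infoDensity, mul_add, mul_sub, Finset.sum_add_distrib, Finset.sum_sub_distrib,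
    hT, hYA, hYT, hA]

theorem continuous_pYA (y : Y) (a : A) :
    Continuous fun P : X → Strat Y Xh A → ℝ => pYA PX PW P y a := by
  unfold pYA pXYT
  exact continuous_finsetSum _ fun x _ => continuous_finsetSum _ fun t _ =>
    (continuous_apply_apply x t).const_mul _ |>.mul_const _ |>.if_const _ continuous_const

theorem continuous_pA (a : A) : Continuous fun P : X → Strat Y Xh A → ℝ => pA PX P a := by
  unfold pA
  exact continuous_finsetSum _ fun x _ => continuous_finsetSum _ fun t _ =>
    (continuous_apply_apply x t).const_mul _ |>.if_const _ continuous_const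

variable (Xh) in
theorem continuousOn_rateFun (hPX : IsPMF PX) (hPW : ∀ a x, IsPMF (PW a x)) :
    ContinuousOn (rateFun (Xh := Xh) PX PW) {P | IsCondPMF P} := by
  refine ContinuousOn.congr (Continuous.continuousOn ?_) fun P hP =>
    (rateFun_eq_sum_infoDensity hPX.1 hPW fun x t => (hP x).1 t).trans
      (sum_pXYT_mul_infoDensity hPW)
  refine (((continuous_finsetSum _ fun x _ => continuous_finsetSum _ fun t _ => ?_).add
    (continuous_finsetSum _ fun y _ => continuous_finsetSum _ fun a _ => ?_)).sub
    (continuous_finsetSum _ fun y _ => continuous_finsetSum _ fun t _ => ?_)).sub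
    (continuous_finsetSum _ fun a _ => ?_)
  · exact (continuous_mul_logb.comp (continuous_apply_apply x t)).const_mul _
  · exact continuous_mul_logb.comp (continuous_pYA y a)
  · exact continuous_mul_logb.comp (continuous_pYT y t)
  · exact continuous_mul_logb.comp (continuous_pA a)

end Rate

section Convexity

variable {X Y A Xh : Type} [Fintype X] [Fintype Y] [Fintype A] [Fintype Xh] [DecidableEq Y]
  [DecidableEq A] {PX : X → ℝ} {PW : A → X → Y → ℝ} {P : X → Strat Y Xh A → ℝ}

variable (PX PW) in
/-- `rateFun PX PW P` is the minimum of `varRate PX PW P q` over the weights `q` with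
`IsRateWeight PX PW P q`, attained at `optimalWeight PX PW P`. -/
noncomputable def varRate (P : X → Strat Y Xh A → ℝ) (q : Y → Strat Y Xh A → ℝ) : ℝ :=
  ∑ x, ∑ y, ∑ t, pXYT PX PW P x y t * logb 2 (P x t / q y t)

variable (PX PW P) in
structure IsRateWeight (q : Y → Strat Y Xh A → ℝ) : Prop where
  nonneg : ∀ y t, 0 ≤ q y t
  pos : ∀ x y t, 0 < pXYT PX PW P x y t → 0 < q y t
  sum_ite_le : ∀ y a, ∑ t, (if t.2 = a then q y t else 0) ≤ pA PX P a

variable (PX PW P) in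
/-- `P_A(a(t)) P(t | y, a(t))`. -/
noncomputable def optimalWeight (y : Y) (t : Strat Y Xh A) : ℝ :=
  pA PX P t.2 * pYT PX PW P y t / pYA PX PW P y t.2

theorem varRate_sub_rateFun (hPX : ∀ x, 0 ≤ PX x) (hPW : ∀ a x, IsPMF (PW a x))
    (hP : ∀ x t, 0 ≤ P x t) {q : Y → Strat Y Xh A → ℝ} (hq : IsRateWeight PX PW P q) :
    varRate PX PW P q - rateFun PX PW P = ∑ y, ∑ t, pYT PX PW P y t *
      logb 2 (pYT PX PW P y t / (q y t * (pYA PX PW P y t.2 / pA PX P t.2))) := by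
  have hPW0 a x y : 0 ≤ PW a x y := (hPW a x).1 y
  rw [rateFun_eq_sum_infoDensity hPX hPW hP, varRate, ← sum_pXYT_mul_eq_sum_pYT_mul
    fun y t => logb 2 (pYT PX PW P y t / (q y t * (pYA PX PW P y t.2 / pA PX P t.2)))]
  simp only [← Finset.sum_sub_distrib, ← mul_sub]
  refine Finset.sum_congr rfl fun x _ => Finset.sum_congr rfl fun y _ =>
    Finset.sum_congr rfl fun t _ => ?_
  rcases (pXYT_nonneg hPX hPW0 hP x y t).eq_or_lt with h | h
  · simp [← h]
  obtain ⟨-, h₂, -, -, h₅, h₆, h₇⟩ := pos_of_pXYT_pos hPX hPW0 hP h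
  have h₈ := hq.pos x y t h
  congr 1
  simp [infoDensity, logb_div, logb_mul, h₂.ne', h₅.ne', h₆.ne', h₇.ne', h₈.ne']
  ring

theorem IsRateWeight.sum_mul_div_le (hPX : ∀ x, 0 ≤ PX x) (hPW : ∀ a x y, 0 ≤ PW a x y)
    (hP : ∀ x t, 0 ≤ P x t) {q : Y → Strat Y Xh A → ℝ} (hq : IsRateWeight PX PW P q) (y : Y) :
    ∑ t, q y t * (pYA PX PW P y t.2 / pA PX P t.2) ≤ ∑ t, pYT PX PW P y t := by
  calc ∑ t, q y t * (pYA PX PW P y t.2 / pA PX P t.2)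
      = ∑ a, (∑ t, if t.2 = a then q y t else 0) * (pYA PX PW P y a / pA PX P a) :=
        (sum_fiberwise_ite_mul Prod.snd _ fun a => pYA PX PW P y a / pA PX P a).symm
    _ ≤ ∑ a, pYA PX PW P y a := by
      refine Finset.sum_le_sum fun a _ => ?_
      rcases (pA_nonneg (Xh := Xh) hPX hP a).eq_or_lt with h | h
      · simp [← h, pYA_nonneg hPX hPW hP]
      calc (∑ t, if t.2 = a then q y t else 0) * (pYA PX PW P y a / pA PX P a)
          ≤ pA PX P a * (pYA PX PW P y a / pA PX P a) :=
            mul_le_mul_of_nonneg_right (hq.sum_ite_le y a)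
              (div_nonneg (pYA_nonneg hPX hPW hP y a) h.le)
        _ = pYA PX PW P y a := mul_div_cancel₀ _ h.ne'
    _ = ∑ t, pYT PX PW P y t := by
      simpa [← pYA_eq_sum_pYT] using sum_fiberwise_ite_mul Prod.snd (pYT PX PW P y) 1

theorem rateFun_le_varRate (hPX : ∀ x, 0 ≤ PX x) (hPW : ∀ a x, IsPMF (PW a x))
    (hP : ∀ x t, 0 ≤ P x t) {q : Y → Strat Y Xh A → ℝ} (hq : IsRateWeight PX PW P q) :
    rateFun PX PW P ≤ varRate PX PW P q := by
  have hPW0 a x y : 0 ≤ PW a x y := (hPW a x).1 y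
  have hpos y t (h : 0 < pYT PX PW P y t) : 0 < q y t * (pYA PX PW P y t.2 / pA PX P t.2) := by
    obtain ⟨x, -, hx⟩ := Finset.exists_lt_of_sum_lt (s := Finset.univ) (f := fun _ => (0 : ℝ))
      (g := fun x => pXYT PX PW P x y t) (by simpa [pYT] using h)
    obtain ⟨-, -, -, -, h₅, -, h₇⟩ := pos_of_pXYT_pos hPX hPW0 hP hx
    exact mul_pos (hq.pos x y t hx) (div_pos h₇ h₅)
  rw [← sub_nonneg, varRate_sub_rateFun hPX hPW hP hq]
  refine Finset.sum_nonneg fun y _ => le_trans ?_ (Finset.sum_le_sum fun t _ =>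
    sub_div_log_le_mul_logb_div one_lt_two (pYT_nonneg hPX hPW0 hP y t)
      (mul_nonneg (hq.nonneg y t) (div_nonneg (pYA_nonneg hPX hPW0 hP y t.2)
        (pA_nonneg hPX hP t.2))) (hpos y t))
  rw [← Finset.sum_div, Finset.sum_sub_distrib]
  exact div_nonneg (sub_nonneg.2 (hq.sum_mul_div_le hPX hPW0 hP y)) (log_nonneg one_le_two)

theorem rateFun_eq_varRate_optimalWeight (hPX : ∀ x, 0 ≤ PX x) (hPW : ∀ a x, IsPMF (PW a x))
    (hP : ∀ x t, 0 ≤ P x t) : rateFun PX PW P = varRate PX PW P (optimalWeight PX PW P) := by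
  have hPW0 a x y : 0 ≤ PW a x y := (hPW a x).1 y
  rw [rateFun_eq_sum_infoDensity hPX hPW hP, varRate]
  refine Finset.sum_congr rfl fun x _ => Finset.sum_congr rfl fun y _ =>
    Finset.sum_congr rfl fun t _ => ?_
  rcases (pXYT_nonneg hPX hPW0 hP x y t).eq_or_lt with h | h
  · simp [← h]
  obtain ⟨-, h₂, -, -, h₅, h₆, h₇⟩ := pos_of_pXYT_pos hPX hPW0 hP h
  congr 1
  simp [infoDensity, optimalWeight, logb_div, logb_mul, h₂.ne', h₅.ne', h₆.ne', h₇.ne']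
  ring

theorem isRateWeight_optimalWeight (hPX : ∀ x, 0 ≤ PX x) (hPW : ∀ a x y, 0 ≤ PW a x y)
    (hP : ∀ x t, 0 ≤ P x t) : IsRateWeight PX PW P (optimalWeight PX PW P) where
  nonneg y t := div_nonneg (mul_nonneg (pA_nonneg hPX hP t.2) (pYT_nonneg hPX hPW hP y t))
    (pYA_nonneg hPX hPW hP y t.2)
  pos x y t h := by
    obtain ⟨-, -, -, -, h₅, h₆, h₇⟩ := pos_of_pXYT_pos hPX hPW hP h
    exact div_pos (mul_pos h₅ h₆) h₇
  sum_ite_le y a := by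
    have h t : (if t.2 = a then optimalWeight PX PW P y t else 0) =
        (if t.2 = a then pYT PX PW P y t else 0) * (pA PX P a / pYA PX PW P y a) := by
      split_ifs with ht
      · rw [optimalWeight, ht]
        ring
      · rw [zero_mul]
    rw [Finset.sum_congr rfl fun t _ => h t, ← Finset.sum_mul, ← pYA_eq_sum_pYT]
    rcases (pYA_nonneg hPX hPW hP y a).eq_or_lt with h | h
    · simp [← h, pA_nonneg hPX hP]
    · rw [mul_div_cancel₀ _ h.ne']

theorem pA_smul_add_smul (P₁ P₂ : X → Strat Y Xh A → ℝ) (l m : ℝ) (a : A) :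
    pA PX (l • P₁ + m • P₂) a = l * pA PX P₁ a + m * pA PX P₂ a := by
  simp only [pA, Finset.mul_sum, ← Finset.sum_add_distrib]
  refine Finset.sum_congr rfl fun x _ => Finset.sum_congr rfl fun t _ => ?_
  split_ifs
  · simp only [Pi.add_apply, Pi.smul_apply, smul_eq_mul]
    ring
  · ring

theorem IsRateWeight.smul_add_smul (hPX : ∀ x, 0 ≤ PX x) (hPW : ∀ a x y, 0 ≤ PW a x y)
    {P₁ P₂ : X → Strat Y Xh A → ℝ} (hP₁ : ∀ x t, 0 ≤ P₁ x t) (hP₂ : ∀ x t, 0 ≤ P₂ x t)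
    {q₁ q₂ : Y → Strat Y Xh A → ℝ} (hq₁ : IsRateWeight PX PW P₁ q₁)
    (hq₂ : IsRateWeight PX PW P₂ q₂) {l m : ℝ} (hl : 0 ≤ l) (hm : 0 ≤ m) :
    IsRateWeight PX PW (l • P₁ + m • P₂) (l • q₁ + m • q₂) where
  nonneg y t := add_nonneg (mul_nonneg hl (hq₁.nonneg y t)) (mul_nonneg hm (hq₂.nonneg y t))
  pos x y t h := by
    have h₁0 := pXYT_nonneg hPX hPW hP₁ x y t
    have h₂0 := pXYT_nonneg hPX hPW hP₂ x y t
    simp only [pXYT_smul_add_smul, Pi.add_apply, Pi.smul_apply, smul_eq_mul] at h ⊢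
    rcases (mul_nonneg hl h₁0).eq_or_lt with h₁ | h₁
    · have h₂ : 0 < m * pXYT PX PW P₂ x y t := by linarith
      exact add_pos_of_nonneg_of_pos (mul_nonneg hl (hq₁.nonneg y t))
        (mul_pos (pos_of_mul_pos_left h₂ h₂0) (hq₂.pos x y t (pos_of_mul_pos_right h₂ hm)))
    · exact add_pos_of_pos_of_nonneg
        (mul_pos (pos_of_mul_pos_left h₁ h₁0) (hq₁.pos x y t (pos_of_mul_pos_right h₁ hl)))
        (mul_nonneg hm (hq₂.nonneg y t))
  sum_ite_le y a := by
    have hsplit : ∑ t, (if t.2 = a then (l • q₁ + m • q₂) y t else 0) =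
        l * ∑ t, (if t.2 = a then q₁ y t else 0) + m * ∑ t, (if t.2 = a then q₂ y t else 0) := by
      rw [Finset.mul_sum, Finset.mul_sum, ← Finset.sum_add_distrib]
      exact Finset.sum_congr rfl fun t _ => by split_ifs <;> simp
    rw [pA_smul_add_smul, hsplit]
    exact add_le_add (mul_le_mul_of_nonneg_left (hq₁.sum_ite_le y a) hl)
      (mul_le_mul_of_nonneg_left (hq₂.sum_ite_le y a) hm)

theorem varRate_smul_add_smul_le (hPX : ∀ x, 0 ≤ PX x) (hPW : ∀ a x y, 0 ≤ PW a x y)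
    {P₁ P₂ : X → Strat Y Xh A → ℝ} (hP₁ : ∀ x t, 0 ≤ P₁ x t) (hP₂ : ∀ x t, 0 ≤ P₂ x t)
    {q₁ q₂ : Y → Strat Y Xh A → ℝ} (hq₁ : IsRateWeight PX PW P₁ q₁)
    (hq₂ : IsRateWeight PX PW P₂ q₂) {l m : ℝ} (hl : 0 ≤ l) (hm : 0 ≤ m) (hlm : l + m = 1) :
    varRate PX PW (l • P₁ + m • P₂) (l • q₁ + m • q₂) ≤
      l * varRate PX PW P₁ q₁ + m * varRate PX PW P₂ q₂ := by
  simp only [varRate, Finset.mul_sum, ← Finset.sum_add_distrib]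
  refine Finset.sum_le_sum fun x _ => Finset.sum_le_sum fun y _ =>
    Finset.sum_le_sum fun t _ => ?_
  have hpXYT (Q : X → Strat Y Xh A → ℝ) : pXYT PX PW Q x y t = PX x * PW t.2 x y * Q x t := by
    unfold pXYT
    ring
  simp only [hpXYT, Pi.add_apply, Pi.smul_apply, smul_eq_mul]
  rcases (mul_nonneg (hPX x) (hPW t.2 x y)).eq_or_lt with hc | hc
  · simp [← hc]
  have hmem {Q : X → Strat Y Xh A → ℝ} {q : Y → Strat Y Xh A → ℝ} (hQ : ∀ x t, 0 ≤ Q x t)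
      (hq : IsRateWeight PX PW Q q) :
      (Q x t, q y t) ∈ {p : ℝ × ℝ | 0 ≤ p.1 ∧ 0 ≤ p.2 ∧ (0 < p.1 → 0 < p.2)} :=
    ⟨hQ x t, hq.nonneg y t, fun h => hq.pos x y t (by rw [hpXYT]; exact mul_pos hc h)⟩
  have key := (convexOn_mul_logb_div one_lt_two).2 (hmem hP₁ hq₁) (hmem hP₂ hq₂) hl hm hlm
  simp only [Prod.smul_mk, Prod.mk_add_mk, smul_eq_mul] at key
  calc PX x * PW t.2 x y * (l * P₁ x t + m * P₂ x t) *
        logb 2 ((l * P₁ x t + m * P₂ x t) / (l * q₁ y t + m * q₂ y t))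
      = PX x * PW t.2 x y * ((l * P₁ x t + m * P₂ x t) *
        logb 2 ((l * P₁ x t + m * P₂ x t) / (l * q₁ y t + m * q₂ y t))) := by ring
    _ ≤ PX x * PW t.2 x y * (l * (P₁ x t * logb 2 (P₁ x t / q₁ y t)) +
        m * (P₂ x t * logb 2 (P₂ x t / q₂ y t))) := mul_le_mul_of_nonneg_left key hc.le
    _ = _ := by ring

variable (Xh) in
theorem convexOn_rateFun (hPX : IsPMF PX) (hPW : ∀ a x, IsPMF (PW a x)) :
    ConvexOn ℝ {P | IsCondPMF P} (rateFun (Xh := Xh) PX PW) := by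
  refine ⟨convex_setOf_isCondPMF, fun P₁ hP₁ P₂ hP₂ l m hl hm hlm => ?_⟩
  have hPW0 a x y : 0 ≤ PW a x y := (hPW a x).1 y
  have hP₁0 x t : 0 ≤ P₁ x t := (hP₁ x).1 t
  have hP₂0 x t : 0 ≤ P₂ x t := (hP₂ x).1 t
  have hP x t : 0 ≤ (l • P₁ + m • P₂) x t := (convex_setOf_isCondPMF hP₁ hP₂ hl hm hlm x).1 t
  have hw₁ := isRateWeight_optimalWeight hPX.1 hPW0 hP₁0
  have hw₂ := isRateWeight_optimalWeight hPX.1 hPW0 hP₂0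
  calc rateFun PX PW (l • P₁ + m • P₂)
      ≤ varRate PX PW (l • P₁ + m • P₂)
          (l • optimalWeight PX PW P₁ + m • optimalWeight PX PW P₂) :=
        rateFun_le_varRate hPX.1 hPW hP (hw₁.smul_add_smul hPX.1 hPW0 hP₁0 hP₂0 hw₂ hl hm)
    _ ≤ l * varRate PX PW P₁ (optimalWeight PX PW P₁) +
        m * varRate PX PW P₂ (optimalWeight PX PW P₂) :=
      varRate_smul_add_smul_le hPX.1 hPW0 hP₁0 hP₂0 hw₁ hw₂ hl hm hlm
    _ = l • rateFun PX PW P₁ + m • rateFun PX PW P₂ := by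
      rw [rateFun_eq_varRate_optimalWeight hPX.1 hPW hP₁0,
        rateFun_eq_varRate_optimalWeight hPX.1 hPW hP₂0]
      rfl

end Convexity

section Constraints

variable {X Y A Xh : Type} [Fintype X] [Fintype Y] [Fintype A] [Fintype Xh] [DecidableEq Y]
  (PX : X → ℝ) (PW : A → X → Y → ℝ) (dist : X → Xh → ℝ) (cost : A → ℝ)

theorem isLinearMap_expDist : IsLinearMap ℝ (expDist (Xh := Xh) PX PW dist) := by
  constructor
  · intro P₁ P₂
    simp only [expDist, pXYT, Pi.add_apply, ← Finset.sum_add_distrib]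
    exact Finset.sum_congr rfl fun _ _ => Finset.sum_congr rfl fun _ _ =>
      Finset.sum_congr rfl fun _ _ => by ring
  · intro l P
    simp only [expDist, pXYT, Pi.smul_apply, smul_eq_mul, Finset.mul_sum]
    exact Finset.sum_congr rfl fun _ _ => Finset.sum_congr rfl fun _ _ =>
      Finset.sum_congr rfl fun _ _ => by ring

theorem isLinearMap_expCost : IsLinearMap ℝ (expCost (Y := Y) (Xh := Xh) PX cost) := by
  constructor
  · intro P₁ P₂
    simp only [expCost, Pi.add_apply, ← Finset.sum_add_distrib]
    exact Finset.sum_congr rfl fun _ _ => Finset.sum_congr rfl fun _ _ => by ring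
  · intro l P
    simp only [expCost, Pi.smul_apply, smul_eq_mul, Finset.mul_sum]
    exact Finset.sum_congr rfl fun _ _ => Finset.sum_congr rfl fun _ _ => by ring

theorem continuous_expDist : Continuous (expDist (Xh := Xh) PX PW dist) := by
  unfold expDist pXYT
  fun_prop

theorem continuous_expCost : Continuous (expCost (Y := Y) (Xh := Xh) PX cost) := by
  unfold expCost
  fun_prop

theorem exists_isCondPMF_expDist_eq_zero_expCost_eq_zero (hdist : ∀ x, ∃ xh, dist x xh = 0)
    (hcost : ∃ a, cost a = 0) : ∃ P : X → Strat Y Xh A → ℝ, IsCondPMF P ∧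
      expDist PX PW dist P = 0 ∧ expCost PX cost P = 0 := by
  classical
  choose xh hxh using hdist
  obtain ⟨a₀, ha₀⟩ := hcost
  refine ⟨fun x => Pi.single (fun _ => xh x, a₀) 1, fun x => ⟨fun t => ?_, by simp⟩, ?_, ?_⟩
  · by_cases h : t = (fun _ => xh x, a₀) <;> simp [h]
  · simp [expDist, pXYT, Pi.single_apply, hxh]
  · simp [expCost, Pi.single_apply, ha₀]

end Constraints

theorem RDC_dual_representation_general
    {X Y A Xh : Type} [Fintype X] [Fintype Y] [Fintype A] [Fintype Xh]
    [DecidableEq Y] [DecidableEq A]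
    (PX : X → ℝ) (PW : A → X → Y → ℝ) (dist : X → Xh → ℝ) (cost : A → ℝ)
    (hPX : IsPMF PX)
    (hPW : ∀ a x, IsPMF (PW a x))
    (hdist0 : ∀ x, ∃ xh, dist x xh = 0)
    (hcost0 : ∃ a, cost a = 0)
    (D C : ℝ) (hD : 0 ≤ D) (hC : 0 ≤ C) :
    RDC PX PW dist cost D C =
      sSup { v : ℝ | ∃ s : ℝ, s ≤ 0 ∧ ∃ m : ℝ, m ≤ 0 ∧
        ∃ Pstar : X → Strat Y Xh A → ℝ, IsCondPMF Pstar ∧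
          (∀ PT : X → Strat Y Xh A → ℝ, IsCondPMF PT →
            Jfun PX PW dist cost s m Pstar ≤ Jfun PX PW dist cost s m PT) ∧
          v = (s * expDist PX PW dist Pstar + m * expCost PX cost Pstar +
                Jmin PX PW dist cost s m) +
              s * (D - expDist PX PW dist Pstar) +
              m * (C - expCost PX cost Pstar) } := by
  obtain ⟨P₀, hP₀, hdist₀, hcost₀⟩ :=
    exists_isCondPMF_expDist_eq_zero_expCost_eq_zero PX PW dist cost hdist0 hcost0
  exact sInf_constrained_eq_sSup_at_lagrangeMinimizers isCompact_setOf_isCondPMF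
    (convexOn_rateFun Xh hPX hPW)
    ((IsLinearMap.mk' _ (isLinearMap_expDist PX PW dist)).convexOn convex_setOf_isCondPMF)
    ((IsLinearMap.mk' _ (isLinearMap_expCost PX cost)).convexOn convex_setOf_isCondPMF)
    (continuousOn_rateFun Xh hPX hPW) (continuous_expDist PX PW dist)
    (continuous_expCost PX cost) ⟨P₀, hP₀, hdist₀.trans_le hD, hcost₀.trans_le hC⟩

/-- Dual representation: for every `D ≥ 0` and `C ≥ 0`,
`R(D,C) = max_{s ≤ 0, m ≤ 0} ( R_{s,m} + s (D − D_{s,m}) + m (C − C_{s,m}) )`, where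
`R_{s,m}, D_{s,m}, C_{s,m}` are defined from a minimizer `P*_{T|X}` of the Lagrangian. -/
theorem RDC_dual_representation
    {X Y A Xh : Type} [Fintype X] [Fintype Y] [Fintype A] [Fintype Xh]
    [DecidableEq X] [DecidableEq Y] [DecidableEq A] [DecidableEq Xh]
    [Nonempty X] [Nonempty Y] [Nonempty A] [Nonempty Xh]
    (PX : X → ℝ) (PW : A → X → Y → ℝ) (dist : X → Xh → ℝ) (cost : A → ℝ)
    (hPX : IsPMF PX) (hPXpos : ∀ x, 0 < PX x)
    (hPW : ∀ a x, IsPMF (PW a x))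
    (hdist : ∀ x xh, 0 ≤ dist x xh) (hdist0 : ∀ x, ∃ xh, dist x xh = 0)
    (hcost : ∀ a, 0 ≤ cost a) (hcost0 : ∃ a, cost a = 0)
    (D C : ℝ) (hD : 0 ≤ D) (hC : 0 ≤ C) :
    RDC PX PW dist cost D C =
      sSup { v : ℝ | ∃ s : ℝ, s ≤ 0 ∧ ∃ m : ℝ, m ≤ 0 ∧
        ∃ Pstar : X → Strat Y Xh A → ℝ, IsCondPMF Pstar ∧
          (∀ PT : X → Strat Y Xh A → ℝ, IsCondPMF PT →
            Jfun PX PW dist cost s m Pstar ≤ Jfun PX PW dist cost s m PT) ∧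
          v = (s * expDist PX PW dist Pstar + m * expCost PX cost Pstar +
                Jmin PX PW dist cost s m) +
              s * (D - expDist PX PW dist Pstar) +
              m * (C - expCost PX cost Pstar) } :=
  RDC_dual_representation_general PX PW dist cost hPX hPW hdist0 hcost0 D C hD hC
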